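/- arXiv:2510.00132 — 5 statements merged into one kernel-verified Lean document; each statement's English description precedes it below -/
import Mathlib

section
/- Let V be a complex inner product space, let e₀, ψ, φ ∈ V be unit vectors, let δ ∈ [0, 1] with ⟨e₀, ψ⟩ = √δ, and let p̃ = |⟨e₀, φ⟩|². Then |⟨ψ, φ⟩| ≥ √(δ·p̃) − √((1 − δ)(1 − p̃)). In particular, if p̃ ≥ δ − ε for some ε ∈ [0, δ] and √(δ(δ−ε)) ≥ √((1−δ)(1−δ+ε)), then the fidelity satisfies |⟨ψ, φ⟩|² ≥ (√(δ(δ−ε)) − √((1−δ)(1−δ+ε)))². -/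
/-!
Split `ψ` and `φ` into their components along `e₀` and orthogonal to it. Then
`⟨ψ, φ⟩ = conj ⟨e₀, ψ⟩ ⟨e₀, φ⟩ + ⟨χ, ξ⟩` with `‖χ‖ = √(1 - δ)` and `‖ξ‖ = √(1 - p̃)`, so the
reverse triangle inequality and Cauchy–Schwarz on `⟨χ, ξ⟩` give the first bound. That bound is
monotone in `p̃`, so `p̃ ≥ δ - ε` lets us replace `p̃` by `δ - ε`; squaring the resulting
nonnegative lower bound gives the fidelity bound.
-/

open scoped InnerProductSpace ComplexConjugate

section UnitVector

variable {𝕜 V : Type*} [RCLike 𝕜] [NormedAddCommGroup V] [InnerProductSpace 𝕜 V]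
  {e : V}

theorem inner_eq_conj_mul_add_inner_sub_smul (he : ‖e‖ = 1) (x y : V) :
    ⟪x, y⟫_𝕜 = conj ⟪e, x⟫_𝕜 * ⟪e, y⟫_𝕜 + ⟪x - ⟪e, x⟫_𝕜 • e, y - ⟪e, y⟫_𝕜 • e⟫_𝕜 := by
  simp only [inner_sub_left, inner_sub_right, inner_smul_left, inner_smul_right,
    inner_self_eq_norm_sq_to_K, he, inner_conj_symm]
  push_cast
  ring

theorem norm_sub_inner_smul_sq (he : ‖e‖ = 1) (x : V) :
    ‖x - ⟪e, x⟫_𝕜 • e‖ ^ 2 = ‖x‖ ^ 2 - ‖⟪e, x⟫_𝕜‖ ^ 2 := by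
  have hx : ⟪x, ⟪e, x⟫_𝕜 • e⟫_𝕜 = (‖⟪e, x⟫_𝕜‖ ^ 2 : ℝ) := by
    rw [inner_smul_right, ← inner_conj_symm x e, RCLike.mul_conj]; norm_cast
  rw [@norm_sub_sq 𝕜, hx, RCLike.ofReal_re, norm_smul, he]
  ring

theorem sqrt_sub_sqrt_le_norm_inner (he : ‖e‖ = 1) {x y : V} (hx : ‖x‖ = 1) (hy : ‖y‖ = 1) :
    √(‖⟪e, x⟫_𝕜‖ ^ 2 * ‖⟪e, y⟫_𝕜‖ ^ 2) - √((1 - ‖⟪e, x⟫_𝕜‖ ^ 2) * (1 - ‖⟪e, y⟫_𝕜‖ ^ 2))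
      ≤ ‖⟪x, y⟫_𝕜‖ := by
  set x' := x - ⟪e, x⟫_𝕜 • e
  set y' := y - ⟪e, y⟫_𝕜 • e
  have hsqrt : √((1 - ‖⟪e, x⟫_𝕜‖ ^ 2) * (1 - ‖⟪e, y⟫_𝕜‖ ^ 2)) = ‖x'‖ * ‖y'‖ := by
    rw [← Real.sqrt_sq (by positivity : 0 ≤ ‖x'‖ * ‖y'‖), mul_pow, norm_sub_inner_smul_sq he,
      norm_sub_inner_smul_sq he, hx, hy, one_pow]
  calc √(‖⟪e, x⟫_𝕜‖ ^ 2 * ‖⟪e, y⟫_𝕜‖ ^ 2) - √((1 - ‖⟪e, x⟫_𝕜‖ ^ 2) * (1 - ‖⟪e, y⟫_𝕜‖ ^ 2))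
      = ‖conj ⟪e, x⟫_𝕜 * ⟪e, y⟫_𝕜‖ - ‖x'‖ * ‖y'‖ := by
        rw [hsqrt, ← mul_pow, Real.sqrt_sq (by positivity), norm_mul, RCLike.norm_conj]
    _ ≤ ‖conj ⟪e, x⟫_𝕜 * ⟪e, y⟫_𝕜‖ - ‖⟪x', y'⟫_𝕜‖ := by gcongr; exact norm_inner_le_norm x' y'
    _ ≤ ‖⟪x, y⟫_𝕜‖ := by
        rw [inner_eq_conj_mul_add_inner_sub_smul he x y]; exact norm_sub_le_norm_add _ _

end UnitVector

theorem monotone_sqrt_mul_sub_sqrt_mul_one_sub {δ : ℝ} (hδ0 : 0 ≤ δ) (hδ1 : δ ≤ 1) :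
    Monotone fun p : ℝ => √(δ * p) - √((1 - δ) * (1 - p)) := fun q p hqp => by
  have hsqrt_mul : √(δ * q) ≤ √(δ * p) := Real.sqrt_le_sqrt (by gcongr)
  have hsqrt_one_sub : √((1 - δ) * (1 - p)) ≤ √((1 - δ) * (1 - q)) :=
    Real.sqrt_le_sqrt (mul_le_mul_of_nonneg_left (by linarith) (by linarith))
  dsimp only
  linarith

/-- In a complex inner product space, let `e₀, ψ, φ` be unit vectors,
`δ ∈ [0, 1]` with `⟨e₀, ψ⟩ = √δ`, and `p̃ = |⟨e₀, φ⟩|²`. Then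
`|⟨ψ, φ⟩| ≥ √(δ·p̃) − √((1 − δ)(1 − p̃))`; in particular, if `p̃ ≥ δ − ε` for some
`ε ∈ [0, δ]` with `√(δ(δ−ε)) ≥ √((1−δ)(1−δ+ε))`, then
`|⟨ψ, φ⟩|² ≥ (√(δ(δ−ε)) − √((1−δ)(1−δ+ε)))²`. -/
theorem peak_to_fidelity {V : Type*} [NormedAddCommGroup V] [InnerProductSpace ℂ V]
    (e₀ ψ φ : V) (he₀ : ‖e₀‖ = 1) (hψ : ‖ψ‖ = 1) (hφ : ‖φ‖ = 1)
    (δ : ℝ) (hδ0 : 0 ≤ δ) (hδ1 : δ ≤ 1)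
    (hover : (inner ℂ e₀ ψ : ℂ) = (Real.sqrt δ : ℂ)) :
    (Real.sqrt (δ * ‖(inner ℂ e₀ φ : ℂ)‖ ^ 2)
        - Real.sqrt ((1 - δ) * (1 - ‖(inner ℂ e₀ φ : ℂ)‖ ^ 2))
      ≤ ‖(inner ℂ ψ φ : ℂ)‖)
    ∧ (∀ ε : ℝ, 0 ≤ ε → ε ≤ δ →
        δ - ε ≤ ‖(inner ℂ e₀ φ : ℂ)‖ ^ 2 →
        Real.sqrt ((1 - δ) * (1 - δ + ε)) ≤ Real.sqrt (δ * (δ - ε)) →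
        (Real.sqrt (δ * (δ - ε)) - Real.sqrt ((1 - δ) * (1 - δ + ε))) ^ 2
          ≤ ‖(inner ℂ ψ φ : ℂ)‖ ^ 2) := by
  have hweight : ‖(inner ℂ e₀ ψ : ℂ)‖ ^ 2 = δ := by
    rw [hover, Complex.norm_real, Real.norm_of_nonneg (Real.sqrt_nonneg δ), Real.sq_sqrt hδ0]
  have hbound := sqrt_sub_sqrt_le_norm_inner (𝕜 := ℂ) he₀ hψ hφ
  rw [hweight] at hbound
  refine ⟨hbound, fun ε _ _ hpeak hF => ?_⟩
  have hε_bound : √(δ * (δ - ε)) - √((1 - δ) * (1 - δ + ε)) ≤ ‖(inner ℂ ψ φ : ℂ)‖ := by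
    rw [show 1 - δ + ε = 1 - (δ - ε) by ring]
    exact (monotone_sqrt_mul_sub_sqrt_mul_one_sub hδ0 hδ1 hpeak).trans hbound
  exact pow_le_pow_left₀ (sub_nonneg.2 hF) hε_bound 2
end

section
/- Let n ≥ 1, let C be a unitary on ℂ^(2^n), and define the unitary P := (|0⟩⟨0| ⊗ I + |1⟩⟨1| ⊗ C)·(H ⊗ I) on ℂ² ⊗ ℂ^(2^n), where H is the 2 × 2 Hadamard matrix. Let {|x⟩} denote the standard basis of ℂ^(2^n). Then, for the input state |0⟩ ⊗ |0^n⟩: (i) |⟨0, 0^n| P |0, 0^n⟩|² = 1/2; (ii) for every basis vector x, |⟨1, x| P |0, 0^n⟩|² = (1/2)·|⟨x| C |0^n⟩|²; and (iii) ⟨0, x| P |0, 0^n⟩ = 0 for every x ≠ 0^n. In particular, p_x(C) := |⟨x| C |0^n⟩|² = 2·|⟨1, x| P |0, 0^n⟩|² for all x. -/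
open scoped Kronecker

/-- The 2×2 Hadamard matrix `H = (1/√2)·[[1,1],[1,−1]]`. -/
noncomputable def hadamardMat : Matrix (Fin 2) (Fin 2) ℂ :=
  ((Real.sqrt 2 : ℂ))⁻¹ • !![1, 1; 1, -1]

/-- The peaked embedding `P = (|0⟩⟨0| ⊗ I + |1⟩⟨1| ⊗ C)·(H ⊗ I)` of an `n`-qubit
circuit `C` on `ℂ² ⊗ ℂ^(2^n)`. -/
noncomputable def peakedEmbedding (n : ℕ) (C : Matrix (Fin (2 ^ n)) (Fin (2 ^ n)) ℂ) :
    Matrix (Fin 2 × Fin (2 ^ n)) (Fin 2 × Fin (2 ^ n)) ℂ :=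
  (Matrix.single (0 : Fin 2) (0 : Fin 2) (1 : ℂ) ⊗ₖ
      (1 : Matrix (Fin (2 ^ n)) (Fin (2 ^ n)) ℂ)
    + Matrix.single (1 : Fin 2) (1 : Fin 2) (1 : ℂ) ⊗ₖ C)
    * (hadamardMat ⊗ₖ (1 : Matrix (Fin (2 ^ n)) (Fin (2 ^ n)) ℂ))

/-! The first column of `H ⊗ I` is `|+⟩ ⊗ I`, and the controlled gate acts blockwise, so
`P |0, 0^n⟩ = (|0⟩ ⊗ |0^n⟩ + |1⟩ ⊗ C |0^n⟩) / √2`; every claim is read off from this vector. -/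

namespace Matrix

variable {ι R : Type*} [Fintype ι] [DecidableEq ι] [CommSemiring R]

theorem single_kronecker_add_single_kronecker_mul_kronecker_one_apply
    (A B : Matrix ι ι R) (M : Matrix (Fin 2) (Fin 2) R) (a b : Fin 2) (x y : ι) :
    ((single 0 0 1 ⊗ₖ A + single 1 1 1 ⊗ₖ B) * (M ⊗ₖ 1) : Matrix (Fin 2 × ι) (Fin 2 × ι) R)
      (a, x) (b, y)
      = M a b * ![A, B] a x y := by
  rw [add_mul, ← mul_kronecker_mul, ← mul_kronecker_mul, Matrix.mul_one, Matrix.mul_one]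
  fin_cases a <;> simp [kroneckerMap_apply, single_mul_apply_same, single_mul_apply_of_ne]

end Matrix

theorem hadamardMat_apply_zero (a : Fin 2) : hadamardMat a 0 = (Real.sqrt 2 : ℂ)⁻¹ := by
  fin_cases a <;> simp [hadamardMat]

theorem peakedEmbedding_apply_zero (n : ℕ) (C : Matrix (Fin (2 ^ n)) (Fin (2 ^ n)) ℂ)
    (a : Fin 2) (x : Fin (2 ^ n)) :
    peakedEmbedding n C (a, x) (0, 0) = (Real.sqrt 2 : ℂ)⁻¹ * ![1, C] a x 0 := by
  rw [peakedEmbedding, Matrix.single_kronecker_add_single_kronecker_mul_kronecker_one_apply,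
    hadamardMat_apply_zero]

theorem norm_inv_sqrt_two_mul_sq (z : ℂ) : ‖(Real.sqrt 2 : ℂ)⁻¹ * z‖ ^ 2 = ‖z‖ ^ 2 / 2 := by
  rw [norm_mul, mul_pow, norm_inv, Complex.norm_real, Real.norm_of_nonneg (Real.sqrt_nonneg 2),
    inv_pow, Real.sq_sqrt zero_le_two]
  ring

theorem peaked_embedding_amplitudes_general (n : ℕ)
    (C : Matrix (Fin (2 ^ n)) (Fin (2 ^ n)) ℂ) :
    (‖peakedEmbedding n C ((0 : Fin 2), (0 : Fin (2 ^ n))) ((0 : Fin 2), (0 : Fin (2 ^ n)))‖ ^ 2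
        = 1 / 2)
    ∧ (∀ x : Fin (2 ^ n),
        ‖peakedEmbedding n C ((1 : Fin 2), x) ((0 : Fin 2), (0 : Fin (2 ^ n)))‖ ^ 2
          = (1 / 2) * ‖C x (0 : Fin (2 ^ n))‖ ^ 2)
    ∧ (∀ x : Fin (2 ^ n), x ≠ 0 →
        peakedEmbedding n C ((0 : Fin 2), x) ((0 : Fin 2), (0 : Fin (2 ^ n))) = 0)
    ∧ (∀ x : Fin (2 ^ n),
        ‖C x (0 : Fin (2 ^ n))‖ ^ 2
          = 2 * ‖peakedEmbedding n C ((1 : Fin 2), x) ((0 : Fin 2), (0 : Fin (2 ^ n)))‖ ^ 2) := by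
  have branch_one (x : Fin (2 ^ n)) :
      ‖peakedEmbedding n C (1, x) (0, 0)‖ ^ 2 = ‖C x 0‖ ^ 2 / 2 := by
    rw [peakedEmbedding_apply_zero, norm_inv_sqrt_two_mul_sq]
    rfl
  refine ⟨?_, fun x => by rw [branch_one]; ring, fun x hx => ?_, fun x => by rw [branch_one]; ring⟩
  · rw [peakedEmbedding_apply_zero, norm_inv_sqrt_two_mul_sq]
    simp
  · simp [peakedEmbedding_apply_zero, hx]

/-- For any unitary `C` on `ℂ^(2^n)` and the peaked embedding `P`,
on input `|0⟩⊗|0^n⟩`: (i) `|⟨0,0^n|P|0,0^n⟩|² = 1/2`; (ii) for every `x`,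
`|⟨1,x|P|0,0^n⟩|² = (1/2)|⟨x|C|0^n⟩|²`; (iii) `⟨0,x|P|0,0^n⟩ = 0` for `x ≠ 0^n`.
In particular `p_x(C) = |⟨x|C|0^n⟩|² = 2·|⟨1,x|P|0,0^n⟩|²` for all `x`. -/
theorem peaked_embedding_amplitudes (n : ℕ) (hn : 1 ≤ n)
    (C : Matrix (Fin (2 ^ n)) (Fin (2 ^ n)) ℂ)
    (hC : C ∈ Matrix.unitaryGroup (Fin (2 ^ n)) ℂ) :
    (‖peakedEmbedding n C ((0 : Fin 2), (0 : Fin (2 ^ n))) ((0 : Fin 2), (0 : Fin (2 ^ n)))‖ ^ 2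
        = 1 / 2)
    ∧ (∀ x : Fin (2 ^ n),
        ‖peakedEmbedding n C ((1 : Fin 2), x) ((0 : Fin 2), (0 : Fin (2 ^ n)))‖ ^ 2
          = (1 / 2) * ‖C x (0 : Fin (2 ^ n))‖ ^ 2)
    ∧ (∀ x : Fin (2 ^ n), x ≠ 0 →
        peakedEmbedding n C ((0 : Fin 2), x) ((0 : Fin 2), (0 : Fin (2 ^ n))) = 0)
    ∧ (∀ x : Fin (2 ^ n),
        ‖C x (0 : Fin (2 ^ n))‖ ^ 2
          = 2 * ‖peakedEmbedding n C ((1 : Fin 2), x) ((0 : Fin 2), (0 : Fin (2 ^ n)))‖ ^ 2) :=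
  peaked_embedding_amplitudes_general n C
end

section
/- Let Y be a random string in {0,1}^n, let E ∈ {0,1}^n have i.i.d. Bernoulli(r) coordinates independent of Y with r ∈ [0, 1/2), and let X = Y ⊕ E (coordinatewise XOR). Fix x⋆ ∈ {0,1}^n, set p = Pr[Y = x⋆], and suppose that for a coordinate j, Pr[Y_j = x⋆_j | Y ≠ x⋆] ≥ 1/2 (no systematic per-bit bias away from x⋆). Then Pr[X_j = x⋆_j] ≥ 1/2 + (1/2)·p·(1 − 2r); i.e., each observed bit has bias toward the peaked string's bit of at least (1/2)·p_max·(1 − 2r). -/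
/-!
The `j`-th observed bit equals `x⋆_j` iff either the noise bit is `0` and `Y_j = x⋆_j`, or it is
`1` and `Y_j ≠ x⋆_j`. By independence this has probability `q (1 - r) + (1 - q) r = r + q (1 - 2r)`
with `q = Pr[Y_j = x⋆_j]`. Splitting `q` according to whether `Y = x⋆`, the bias hypothesis gives
`q ≥ p + (1 - p) / 2`, and since `1 - 2r ≥ 0` the bound `1/2 + p (1 - 2r) / 2` follows.
-/

open MeasureTheory ProbabilityTheory

section

variable {Ω : Type*} [MeasurableSpace Ω] {μ : Measure Ω}

lemma ProbabilityTheory.IndepFun.measureReal_inter_preimage_eq_mul {β γ : Type*}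
    [MeasurableSpace β] [MeasurableSpace γ] {f : Ω → β} {g : Ω → γ} (hfg : IndepFun f g μ)
    {s : Set β} {t : Set γ} (hs : MeasurableSet s) (ht : MeasurableSet t) :
    μ.real (f ⁻¹' s ∩ g ⁻¹' t) = μ.real (f ⁻¹' s) * μ.real (g ⁻¹' t) := by
  simp only [measureReal_def, hfg.measure_inter_preimage_eq_mul s t hs ht, ENNReal.toReal_mul]

lemma map_eval_eq_of_map_eq_pi {ι : Type*} [Fintype ι] {α : ι → Type*}
    [∀ i, MeasurableSpace (α i)] {ν : ∀ i, Measure (α i)} [∀ i, IsProbabilityMeasure (ν i)]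
    {E : Ω → ∀ i, α i} (hE : μ.map E = Measure.pi ν) (i : ι) :
    μ.map (fun ω ↦ E ω i) = ν i := by
  have hEm : AEMeasurable E μ := .of_map_ne_zero (by rw [hE]; exact IsProbabilityMeasure.ne_zero _)
  rw [← (measurePreserving_eval ν i).map_eq, ← hE,
    AEMeasurable.map_map_of_aemeasurable (measurable_pi_apply i).aemeasurable hEm]
  rfl

lemma measureReal_xor_eq_of_indepFun [IsFiniteMeasure μ] {A B : Ω → Bool} (hA : Measurable A)
    (hB : Measurable B) (hAB : IndepFun A B μ) (b : Bool) :
    μ.real {ω | xor (A ω) (B ω) = b}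
      = μ.real {ω | A ω = b} * μ.real {ω | B ω = false}
        + μ.real {ω | A ω = !b} * μ.real {ω | B ω = true} := by
  have hsplit : {ω | xor (A ω) (B ω) = b}
      = (A ⁻¹' {b} ∩ B ⁻¹' {false}) ∪ (A ⁻¹' {!b} ∩ B ⁻¹' {true}) := by
    ext ω
    simp only [Set.mem_ofPred_eq, Set.mem_union, Set.mem_inter_iff, Set.mem_preimage,
      Set.mem_singleton_iff]
    cases A ω <;> cases B ω <;> cases b <;> decide
  have hdisj : Disjoint (A ⁻¹' {b} ∩ B ⁻¹' {false}) (A ⁻¹' {!b} ∩ B ⁻¹' {true}) :=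
    Set.disjoint_left.2 fun ω h h' ↦ by simp_all
  rw [hsplit, measureReal_union hdisj ((hA (.singleton _)).inter (hB (.singleton _))),
    hAB.measureReal_inter_preimage_eq_mul (.singleton _) (.singleton _),
    hAB.measureReal_inter_preimage_eq_mul (.singleton _) (.singleton _)]
  rfl

lemma measureReal_eval_eq_eq_add_ne [IsFiniteMeasure μ] {ι β : Type*} [Countable ι]
    [MeasurableSpace β] [MeasurableSingletonClass β] {Y : Ω → ι → β} (hY : Measurable Y)
    (x : ι → β) (j : ι) :
    μ.real {ω | Y ω j = x j} = μ.real {ω | Y ω = x} + μ.real {ω | Y ω j = x j ∧ Y ω ≠ x} := by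
  have hpeak : {ω | Y ω j = x j} ∩ {ω | Y ω = x} = {ω | Y ω = x} :=
    Set.inter_eq_right.2 fun ω h ↦ congrFun h j
  rw [← measureReal_inter_add_sdiff (s := {ω | Y ω j = x j}) (t := {ω | Y ω = x})
    (hY (measurableSet_singleton x)), hpeak]
  rfl

end

lemma PMF.toMeasure_real_bernoulli_toNNReal_singleton (r : ℝ) (hr : 0 ≤ r)
    (h : r.toNNReal ≤ 1) (b : Bool) :
    (PMF.bernoulli r.toNNReal h).toMeasure.real {b} = cond b r (1 - r) := by
  rw [measureReal_def, PMF.toMeasure_apply_singleton _ _ (.singleton b), PMF.bernoulli_apply]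
  cases b <;> simp [hr, ENNReal.toReal_sub_of_le, h]

/-- Let `Y` be a random string in `{0,1}^n`, `E` an independent string
of i.i.d. `Bernoulli(r)` bits (`r < 1/2`), and `X = Y ⊕ E`. Fix `x⋆`, set
`p = Pr[Y = x⋆]`, and suppose coordinate `j` has no systematic bias away from `x⋆`:
`Pr[Y_j = x⋆_j ∧ Y ≠ x⋆] ≥ (1/2)·Pr[Y ≠ x⋆]`. Then
`Pr[X_j = x⋆_j] ≥ 1/2 + (1/2)·p·(1 − 2r)`. -/
theorem majority_bit_bias {Ω : Type*} [MeasurableSpace Ω]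
    (μ : Measure Ω) [IsProbabilityMeasure μ]
    (n : ℕ) (r : ℝ) (hr0 : 0 ≤ r) (hr1 : r < 1 / 2)
    (Y E : Ω → (Fin n → Bool))
    (hYmeas : Measurable Y) (hEmeas : Measurable E)
    (hindep : ProbabilityTheory.IndepFun Y E μ)
    (hElaw : μ.map E = Measure.pi fun _ : Fin n =>
      (PMF.bernoulli (Real.toNNReal r)
        (by rw [Real.toNNReal_le_one]; linarith)).toMeasure)
    (xstar : Fin n → Bool) (j : Fin n)
    (hbias : (1 / 2) * (μ {ω | Y ω ≠ xstar}).toReal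
      ≤ (μ {ω | Y ω j = xstar j ∧ Y ω ≠ xstar}).toReal) :
    1 / 2 + (1 / 2) * (μ {ω | Y ω = xstar}).toReal * (1 - 2 * r)
      ≤ (μ {ω | xor (Y ω j) (E ω j) = xstar j}).toReal := by
  simp only [← measureReal_def] at hbias ⊢
  have hYj : Measurable fun ω ↦ Y ω j := hYmeas.eval
  have hEj : Measurable fun ω ↦ E ω j := hEmeas.eval
  have hnoise (e : Bool) : μ.real {ω | E ω j = e} = cond e r (1 - r) := by
    rw [← PMF.toMeasure_real_bernoulli_toNNReal_singleton r hr0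
        (Real.toNNReal_le_one.2 (by linarith)) e,
      ← map_eval_eq_of_map_eq_pi hElaw j, map_measureReal_apply hEj (measurableSet_singleton e)]
    rfl
  have hflip : μ.real {ω | Y ω j = !xstar j} = 1 - μ.real {ω | Y ω j = xstar j} :=
    calc μ.real {ω | Y ω j = !xstar j} = μ.real {ω | Y ω j = xstar j}ᶜ :=
          congrArg μ.real (Set.ext fun _ ↦ Bool.eq_not_iff)
      _ = 1 - μ.real {ω | Y ω j = xstar j} :=
          probReal_compl_eq_one_sub (hYj (measurableSet_singleton _))
  have hagree : 1 / 2 + μ.real {ω | Y ω = xstar} / 2 ≤ μ.real {ω | Y ω j = xstar j} := by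
    have hmiss : μ.real {ω | Y ω ≠ xstar} = 1 - μ.real {ω | Y ω = xstar} :=
      probReal_compl_eq_one_sub (hYmeas (measurableSet_singleton xstar))
    linarith [measureReal_eval_eq_eq_add_ne (μ := μ) hYmeas xstar j]
  rw [measureReal_xor_eq_of_indepFun hYj hEj
      (hindep.comp (measurable_pi_apply j) (measurable_pi_apply j)) (xstar j),
    hnoise, hnoise, hflip, cond_false, cond_true]
  nlinarith [mul_le_mul_of_nonneg_right hagree (by linarith : (0 : ℝ) ≤ 1 - 2 * r)]
end

section
/- Let d ≥ 2 and N ≥ 1, and let p₁, …, p_N be nonnegative reals with Σ_i p_i = 1, Σ_i p_i² = 2d/(N(d+1)), and Σ_i p_i³ = 6d²/(N²(d+1)(d+2)). Then Σ over {i : p_i ≥ 1/N} of p_i is at least (d−1)²(d+2)/(6d²(d+1)). In particular, this lower bound is independent of N and tends to 1/6 as d → ∞. -/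
/-!
Off the set `A = {i | 1/N ≤ p i}` one has `p i ^ 2 ≤ p i / N`, so the complement carries at most
`1/N` of the second moment and `∑_A p² ≥ 2d/(N(d+1)) - 1/N = (d-1)/(N(d+1))`. Cauchy–Schwarz
(Paley–Zygmund) gives `(∑_A p²)² ≤ (∑_A p³)(∑_A p) ≤ (∑ p³)(∑_A p)`, and dividing by the third
power sum leaves a bound in which `N` cancels.
-/

open Finset

section PowerSums

variable {ι K : Type*} [Field K] [LinearOrder K] [IsStrictOrderedRing K]
  {s : Finset ι} {p : ι → K} {t : K}

theorem sum_sq_filter_lt_le (hp : ∀ i ∈ s, 0 ≤ p i) (ht : 0 ≤ t) :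
    ∑ i ∈ s with p i < t, p i ^ 2 ≤ t * ∑ i ∈ s, p i :=
  calc ∑ i ∈ s with p i < t, p i ^ 2
      ≤ ∑ i ∈ s with p i < t, t * p i := by
        refine sum_le_sum fun i hi => ?_
        obtain ⟨his, hlt⟩ := mem_filter.mp hi
        rw [sq]
        exact mul_le_mul_of_nonneg_right hlt.le (hp i his)
    _ = t * ∑ i ∈ s with p i < t, p i := (mul_sum _ _ _).symm
    _ ≤ t * ∑ i ∈ s, p i :=
        mul_le_mul_of_nonneg_left
          (sum_le_sum_of_subset_of_nonneg (filter_subset _ _) fun i hi _ => hp i hi) ht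

theorem sub_le_sum_sq_filter_le (hp : ∀ i ∈ s, 0 ≤ p i) (ht : 0 ≤ t) :
    ∑ i ∈ s, p i ^ 2 - t * ∑ i ∈ s, p i ≤ ∑ i ∈ s with t ≤ p i, p i ^ 2 := by
  have hsplit := sum_filter_add_sum_filter_not s (fun i => t ≤ p i) fun i => p i ^ 2
  simp only [not_le] at hsplit
  linarith [sum_sq_filter_lt_le hp ht]

/-- Paley–Zygmund for `X = p_I` with `I ∼ p`. -/
theorem sq_sub_le_sum_cube_mul_sum_filter_le (hp : ∀ i ∈ s, 0 ≤ p i) (ht : 0 ≤ t)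
    (hts : t * ∑ i ∈ s, p i ≤ ∑ i ∈ s, p i ^ 2) :
    (∑ i ∈ s, p i ^ 2 - t * ∑ i ∈ s, p i) ^ 2
      ≤ (∑ i ∈ s, p i ^ 3) * ∑ i ∈ s with t ≤ p i, p i := by
  set A := s.filter fun i => t ≤ p i
  have hpA : ∀ i ∈ A, 0 ≤ p i := fun i hi => hp i (mem_filter.mp hi).1
  calc (∑ i ∈ s, p i ^ 2 - t * ∑ i ∈ s, p i) ^ 2
      ≤ (∑ i ∈ A, p i ^ 2) ^ 2 :=
        pow_le_pow_left₀ (sub_nonneg.mpr hts) (sub_le_sum_sq_filter_le hp ht) 2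
    _ ≤ (∑ i ∈ A, p i ^ 3) * ∑ i ∈ A, p i :=
        sum_sq_le_sum_mul_sum_of_sq_le_mul A (fun i hi => pow_nonneg (hpA i hi) 3) hpA
          fun i _ => le_of_eq (by ring)
    _ ≤ (∑ i ∈ s, p i ^ 3) * ∑ i ∈ A, p i :=
        mul_le_mul_of_nonneg_right
          (sum_le_sum_of_subset_of_nonneg (filter_subset _ _)
            fun i hi _ => pow_nonneg (hp i hi) 3)
          (sum_nonneg hpA)

end PowerSums

/-- Let `d ≥ 2`, `N ≥ 1`, and let `p₁, …, p_N ≥ 0` with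
`Σ p_i = 1`, `Σ p_i² = 2d/(N(d+1))` and `Σ p_i³ = 6d²/(N²(d+1)(d+2))` (the exact
3-design power sums). Then `Σ_{i : p_i ≥ 1/N} p_i ≥ (d−1)²(d+2)/(6d²(d+1))` —
a bound independent of `N` tending to `1/6` as `d → ∞`. -/
theorem three_design_tail_bound (d : ℝ) (hd : 2 ≤ d) (N : ℕ) (hN : 1 ≤ N)
    (p : Fin N → ℝ) (hp : ∀ i, 0 ≤ p i)
    (h1 : ∑ i, p i = 1)
    (h2 : ∑ i, p i ^ 2 = 2 * d / (N * (d + 1)))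
    (h3 : ∑ i, p i ^ 3 = 6 * d ^ 2 / ((N : ℝ) ^ 2 * (d + 1) * (d + 2))) :
    (d - 1) ^ 2 * (d + 2) / (6 * d ^ 2 * (d + 1))
      ≤ ∑ i ∈ Finset.univ.filter fun i => 1 / (N : ℝ) ≤ p i, p i := by
  have hN0 : (0 : ℝ) < N := by exact_mod_cast hN
  have hgap : ∑ i, p i ^ 2 - 1 / (N : ℝ) * ∑ i, p i = (d - 1) / (N * (d + 1)) := by
    rw [h1, h2]
    field_simp
    ring
  have hgap_nonneg : 0 ≤ (d - 1) / (N * (d + 1)) := div_nonneg (by linarith) (by positivity)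
  have hpz := sq_sub_le_sum_cube_mul_sum_filter_le (fun i _ => hp i) (by positivity)
    (sub_nonneg.mp (hgap ▸ hgap_nonneg))
  rw [hgap, h3] at hpz
  have hbound : (d - 1) ^ 2 * (d + 2) / (6 * d ^ 2 * (d + 1))
      = ((d - 1) / (N * (d + 1))) ^ 2 / (6 * d ^ 2 / ((N : ℝ) ^ 2 * (d + 1) * (d + 2))) := by
    field_simp
  rw [hbound]
  exact div_le_of_le_mul₀ (by positivity) (sum_nonneg fun i _ => hp i) (hpz.trans_eq (mul_comm _ _))
end

section
/- Let d ≥ 1, let k ≥ 1 be an integer, let ε ≥ 0, and let δ ∈ (0, 1). Let φ₁, …, φ_N be unit vectors in ℂ^d such that for every unit vector φ' ∈ ℂ^d, (1/N)·Σ_{j=1}^{N} |⟨φ_j, φ'⟩|^(2k) ≤ (1+ε)·binom(d+k−1, k)^(−1). Then: (i) for every unit vector φ', the number of indices j with d_FS(φ_j, φ') ≤ δ is at most N·(1+ε)·(1−δ²)^(−k)·binom(d+k−1, k)^(−1); and (ii) there exists a subset S ⊆ {1, …, N} with d_FS(φ_i, φ_j) > δ for all distinct i, j ∈ S and |S| ≥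 (1−δ²)^k/(1+ε) · binom(d+k−1, k). -/
/-!
A unit vector `φ'` that is `δ`-close to `φ_j` in Fubini–Study distance has
`|⟨φ_j, φ'⟩|^(2k) ≥ (1 - δ²)^k`, so by Markov's inequality the design bound on the `2k`-th
moment caps the number of `φ_j` in any `δ`-ball. A maximal `δ`-separated subset `S` is
`δ`-dense, so the `|S|` balls around its points cover all `N` vectors, which forces `|S|` to be
large.
-/

open Finset

section Packing

variable {ι : Type*} [Fintype ι] (r : ι → ι → Prop)

theorem exists_pairwise_not_rel_forall_exists_rel (hrefl : ∀ i, r i i)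
    (hsymm : ∀ i j, r i j → r j i) :
    ∃ S : Finset ι, (S : Set ι).Pairwise (fun i j => ¬ r i j) ∧ ∀ j, ∃ i ∈ S, r j i := by
  classical
  obtain ⟨S, hSmem, hSmax⟩ := exists_max_image
    ((univ : Finset ι).powerset.filter fun S : Finset ι =>
      (S : Set ι).Pairwise fun i j => ¬ r i j) card ⟨∅, by simp⟩
  have hS : (S : Set ι).Pairwise fun i j => ¬ r i j := (mem_filter.mp hSmem).2
  refine ⟨S, hS, fun j => ?_⟩
  by_contra! hfar
  have hjS : j ∉ S := fun hj => hfar j hj (hrefl j)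
  have hins : ((insert j S : Finset ι) : Set ι).Pairwise fun i j => ¬ r i j := by
    rw [coe_insert, Set.pairwise_insert]
    exact ⟨hS, fun i hi _ => ⟨hfar i hi, fun hij => hfar i hi (hsymm _ _ hij)⟩⟩
  have := hSmax _ (mem_filter.mpr ⟨mem_powerset.mpr (subset_univ _), hins⟩)
  rw [card_insert_of_notMem hjS] at this
  omega

theorem card_le_sum_card_of_forall_exists_rel [DecidableRel r] {S : Finset ι}
    (hS : ∀ j, ∃ i ∈ S, r j i) :
    Fintype.card ι ≤ ∑ i ∈ S, #{j | r j i} := by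
  classical
  calc Fintype.card ι = #(univ : Finset ι) := rfl
    _ ≤ #(S.biUnion fun i => {j | r j i}) := card_le_card fun j _ => by
        obtain ⟨i, hi, hji⟩ := hS j
        exact mem_biUnion.mpr ⟨i, hi, mem_filter.mpr ⟨mem_univ _, hji⟩⟩
    _ ≤ _ := card_biUnion_le

theorem exists_pairwise_not_rel_card_le_mul [DecidableRel r] (hrefl : ∀ i, r i i)
    (hsymm : ∀ i j, r i j → r j i) {M : ℝ} (hM : ∀ i, (#{j | r j i} : ℝ) ≤ M) :
    ∃ S : Finset ι, (S : Set ι).Pairwise (fun i j => ¬ r i j) ∧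
      (Fintype.card ι : ℝ) ≤ #S * M := by
  obtain ⟨S, hsep, hcover⟩ := exists_pairwise_not_rel_forall_exists_rel r hrefl hsymm
  refine ⟨S, hsep, ?_⟩
  calc (Fintype.card ι : ℝ) ≤ ∑ i ∈ S, (#{j | r j i} : ℝ) := by
        exact_mod_cast card_le_sum_card_of_forall_exists_rel r hcover
    _ ≤ ∑ _i ∈ S, M := sum_le_sum fun i _ => hM i
    _ = #S * M := by rw [sum_const, nsmul_eq_mul]

end Packing

theorem card_filter_le_mul_le_sum {ι R : Type*} [Semiring R] [PartialOrder R]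
    [IsOrderedRing R] [DecidableLE R]
    (s : Finset ι) (f : ι → R) (hf : ∀ i ∈ s, 0 ≤ f i) (t : R) :
    (#{i ∈ s | t ≤ f i} : R) * t ≤ ∑ i ∈ s, f i := by
  rw [← nsmul_eq_mul]
  exact (card_nsmul_le_sum _ f t fun i hi => (mem_filter.mp hi).2).trans
    (sum_le_sum_of_subset_of_nonneg (filter_subset _ s) fun i hi _ => hf i hi)

section FubiniStudy

variable (𝕜 : Type*) {E : Type*} [RCLike 𝕜] [NormedAddCommGroup E] [InnerProductSpace 𝕜 E]

noncomputable def fubiniStudyDist (x y : E) : ℝ :=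
  √(1 - ‖(inner 𝕜 x y : 𝕜)‖ ^ 2)

variable {𝕜}

theorem fubiniStudyDist_comm (x y : E) : fubiniStudyDist 𝕜 x y = fubiniStudyDist 𝕜 y x := by
  rw [fubiniStudyDist, fubiniStudyDist, norm_inner_symm]

theorem fubiniStudyDist_self {x : E} (hx : ‖x‖ = 1) : fubiniStudyDist 𝕜 x x = 0 := by
  simp [fubiniStudyDist, inner_self_eq_norm_sq_to_K, hx]

theorem one_sub_sq_le_norm_inner_sq {x y : E} {δ : ℝ} (h : fubiniStudyDist 𝕜 x y ≤ δ) :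
    1 - δ ^ 2 ≤ ‖(inner 𝕜 x y : 𝕜)‖ ^ 2 := by
  have := (Real.sqrt_le_iff.mp h).2
  linarith

theorem card_fubiniStudyDist_le_mul_le_sum {ι : Type*} [Fintype ι] (φ : ι → E) (ψ : E)
    {δ : ℝ} (hδ : δ ^ 2 ≤ 1) (k : ℕ) :
    (#{j | fubiniStudyDist 𝕜 (φ j) ψ ≤ δ} : ℝ) * (1 - δ ^ 2) ^ k
      ≤ ∑ j, ‖(inner 𝕜 (φ j) ψ : 𝕜)‖ ^ (2 * k) := by
  refine le_trans ?_
    (card_filter_le_mul_le_sum univ _ (fun j _ => by positivity) ((1 - δ ^ 2) ^ k))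
  refine mul_le_mul_of_nonneg_right ?_ (pow_nonneg (by linarith) k)
  refine mod_cast card_le_card fun j hj => mem_filter.mpr ⟨mem_univ j, ?_⟩
  rw [pow_mul]
  exact pow_le_pow_left₀ (by linarith) (one_sub_sq_le_norm_inner_sq (mem_filter.mp hj).2) k

end FubiniStudy

theorem approx_design_packing_general (d k : ℕ) (hd : 1 ≤ d)
    (ε δ : ℝ) (hε : 0 ≤ ε) (hδ0 : 0 < δ) (hδ1 : δ < 1)
    (N : ℕ) (hN : 1 ≤ N)
    (φ : Fin N → EuclideanSpace ℂ (Fin d)) (hφ : ∀ j, ‖φ j‖ = 1)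
    (hdesign : ∀ φ' : EuclideanSpace ℂ (Fin d), ‖φ'‖ = 1 →
      (1 / (N : ℝ)) * ∑ j, ‖(inner ℂ (φ j) φ' : ℂ)‖ ^ (2 * k)
        ≤ (1 + ε) / (Nat.choose (d + k - 1) k : ℝ)) :
    (∀ φ' : EuclideanSpace ℂ (Fin d), ‖φ'‖ = 1 →
      ((Finset.univ.filter
          fun j => Real.sqrt (1 - ‖(inner ℂ (φ j) φ' : ℂ)‖ ^ 2) ≤ δ).card : ℝ)
        ≤ (N : ℝ) * (1 + ε) / ((1 - δ ^ 2) ^ k * (Nat.choose (d + k - 1) k : ℝ)))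
    ∧ (∃ S : Finset (Fin N),
        (∀ i ∈ S, ∀ j ∈ S, i ≠ j →
          δ < Real.sqrt (1 - ‖(inner ℂ (φ i) (φ j) : ℂ)‖ ^ 2))
        ∧ (1 - δ ^ 2) ^ k / (1 + ε) * (Nat.choose (d + k - 1) k : ℝ) ≤ (S.card : ℝ)) := by
  have hC : (0 : ℝ) < Nat.choose (d + k - 1) k := by exact_mod_cast Nat.choose_pos (by omega)
  have hN' : (0 : ℝ) < N := by exact_mod_cast hN
  have hδ2 : δ ^ 2 ≤ 1 := by nlinarith
  have hD : (0 : ℝ) < (1 - δ ^ 2) ^ k := pow_pos (by nlinarith) k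
  have hball : ∀ ψ : EuclideanSpace ℂ (Fin d), ‖ψ‖ = 1 →
      (#{j | fubiniStudyDist ℂ (φ j) ψ ≤ δ} : ℝ)
        ≤ N * (1 + ε) / ((1 - δ ^ 2) ^ k * Nat.choose (d + k - 1) k) := by
    intro ψ hψ
    have hmarkov := card_fubiniStudyDist_le_mul_le_sum (𝕜 := ℂ) φ ψ hδ2 k
    have hmoment := hdesign ψ hψ
    rw [one_div, inv_mul_le_iff₀ hN', ← mul_div_assoc, le_div_iff₀ hC] at hmoment
    rw [le_div_iff₀ (by positivity), ← mul_assoc]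
    calc _ ≤ (∑ j, ‖(inner ℂ (φ j) ψ : ℂ)‖ ^ (2 * k)) * Nat.choose (d + k - 1) k := by gcongr
      _ ≤ N * (1 + ε) := hmoment
  refine ⟨hball, ?_⟩
  obtain ⟨S, hsep, hcard⟩ := exists_pairwise_not_rel_card_le_mul
    (fun i j => fubiniStudyDist ℂ (φ i) (φ j) ≤ δ)
    (fun i => (fubiniStudyDist_self (𝕜 := ℂ) (hφ i)).trans_le hδ0.le)
    (fun i j h => (fubiniStudyDist_comm (φ j) (φ i)).trans_le h)
    (fun i => hball (φ i) (hφ i))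
  refine ⟨S, fun i hi j hj hij => not_le.mp (hsep hi hj hij), ?_⟩
  rw [Fintype.card_fin, ← mul_div_assoc, le_div_iff₀ (by positivity)] at hcard
  rw [div_mul_eq_mul_div, div_le_iff₀ (by linarith)]
  refine le_of_mul_le_mul_left ?_ hN'
  linarith

/-- Let `φ₁, …, φ_N` be unit vectors in `ℂ^d` forming an
`ε`-approximate spherical `k`-design: for every unit vector `φ'`,
`(1/N)·Σ_j |⟨φ_j, φ'⟩|^(2k) ≤ (1+ε)/binom(d+k−1, k)`. Then: (i) every Fubini–Study
ball of radius `δ` contains at most `N(1+ε)(1−δ²)^(−k)/binom(d+k−1, k)` of the `φ_j`;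
and (ii) there is a pairwise `δ`-separated (in Fubini–Study distance) subset of the
`φ_j` of size at least `(1−δ²)^k/(1+ε)·binom(d+k−1, k)`. -/
theorem approx_design_packing (d k : ℕ) (hd : 1 ≤ d) (hk : 1 ≤ k)
    (ε δ : ℝ) (hε : 0 ≤ ε) (hδ0 : 0 < δ) (hδ1 : δ < 1)
    (N : ℕ) (hN : 1 ≤ N)
    (φ : Fin N → EuclideanSpace ℂ (Fin d)) (hφ : ∀ j, ‖φ j‖ = 1)
    (hdesign : ∀ φ' : EuclideanSpace ℂ (Fin d), ‖φ'‖ = 1 →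
      (1 / (N : ℝ)) * ∑ j, ‖(inner ℂ (φ j) φ' : ℂ)‖ ^ (2 * k)
        ≤ (1 + ε) / (Nat.choose (d + k - 1) k : ℝ)) :
    (∀ φ' : EuclideanSpace ℂ (Fin d), ‖φ'‖ = 1 →
      ((Finset.univ.filter
          fun j => Real.sqrt (1 - ‖(inner ℂ (φ j) φ' : ℂ)‖ ^ 2) ≤ δ).card : ℝ)
        ≤ (N : ℝ) * (1 + ε) / ((1 - δ ^ 2) ^ k * (Nat.choose (d + k - 1) k : ℝ)))
    ∧ (∃ S : Finset (Fin N),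
        (∀ i ∈ S, ∀ j ∈ S, i ≠ j →
          δ < Real.sqrt (1 - ‖(inner ℂ (φ i) (φ j) : ℂ)‖ ^ 2))
        ∧ (1 - δ ^ 2) ^ k / (1 + ε) * (Nat.choose (d + k - 1) k : ℝ) ≤ (S.card : ℝ)) :=
  approx_design_packing_general d k hd ε δ hε hδ0 hδ1 N hN φ hφ hdesign
end
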